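/- Let ρ be an n×n complex positive semidefinite matrix with trace 1 (a density matrix) and let u be an n×n unitary complex matrix. Then |Tr(u · ρ)| ≤ 1, and |Tr(u · ρ)| = 1 holds if and only if there exists c ∈ ℂ with |c| = 1 such that u · ρ = c • ρ. -/

import Mathlib

open Matrix
open scoped ComplexOrder

local notation "⟪" x ", " y "⟫" => @inner ℂ _ _ x y

private def toEuc {n : ℕ} (A : Matrix (Fin n) (Fin n) ℂ) :
    EuclideanSpace ℂ (Fin n × Fin n) := WithLp.toLp 2 (fun p : Fin n × Fin n => A p.1 p.2)

private lemma inner_toEuc {n : ℕ} (A B : Matrix (Fin n) (Fin n) ℂ) :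
    ⟪toEuc A, toEuc B⟫ = (Aᴴ * B).trace := by
  rw [Matrix.trace]
  simp only [PiLp.inner_apply, toEuc, PiLp.toLp_apply, RCLike.inner_apply', Matrix.diag,
    Matrix.mul_apply, Matrix.conjTranspose_apply, Fintype.sum_prod_type]
  exact Finset.sum_comm

/-- **For a density matrix `ρ` and a unitary `u`, `|Tr(uρ)| ≤ 1`, with equality iff
`uρ = cρ` for some phase `c`.** -/
theorem abs_trace_unitary_mul_density_le_one
    {n : ℕ} (ρ : Matrix (Fin n) (Fin n) ℂ)
    (hρ : ρ.PosSemidef) (hρtr : ρ.trace = 1)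
    (u : Matrix (Fin n) (Fin n) ℂ) (hu : uᴴ * u = 1) :
    ‖(u * ρ).trace‖ ≤ 1 ∧
      (‖(u * ρ).trace‖ = 1 ↔
        ∃ c : ℂ, ‖c‖ = 1 ∧ u * ρ = c • ρ) := by
  obtain ⟨S, hSH, hSS⟩ : ∃ S : Matrix (Fin n) (Fin n) ℂ, Sᴴ = S ∧ S * S = ρ := by
    open scoped MatrixOrder in
    obtain ⟨X, hX, -, hXX⟩ := CFC.exists_sqrt_of_isSelfAdjoint_of_quasispectrumRestricts
      hρ.isHermitian (QuasispectrumRestricts.nnreal_of_nonneg hρ.nonneg)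
    exact ⟨X, hX.star_eq, hXX⟩
  set x : EuclideanSpace ℂ (Fin n × Fin n) := toEuc S with hxdef
  set y : EuclideanSpace ℂ (Fin n × Fin n) := toEuc (u * S) with hydef
  have hxx : ⟪x, x⟫ = 1 := by
    rw [hxdef, inner_toEuc, hSH, hSS, hρtr]
  have hyy : ⟪y, y⟫ = 1 := by
    rw [hydef, inner_toEuc]
    have h2 : (u * S)ᴴ * (u * S) = S * ((uᴴ * u) * S) := by
      rw [conjTranspose_mul, hSH]; noncomm_ring
    rw [h2, hu, one_mul, hSS, hρtr]
  have hnx : ‖x‖ = 1 := by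
    have h := norm_sq_eq_re_inner (𝕜 := ℂ) x
    rw [hxx] at h
    norm_num at h
    rcases h with h | h
    · exact h
    · linarith [norm_nonneg x]
  have hny : ‖y‖ = 1 := by
    have h := norm_sq_eq_re_inner (𝕜 := ℂ) y
    rw [hyy] at h
    norm_num at h
    rcases h with h | h
    · exact h
    · linarith [norm_nonneg y]
  have hxy : ⟪x, y⟫ = (u * ρ).trace := by
    rw [hxdef, hydef, inner_toEuc, hSH, trace_mul_comm, mul_assoc, hSS]
  have habs : ‖(u * ρ).trace‖ = ‖⟪x, y⟫‖ := by
    rw [hxy]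
  constructor
  · rw [habs]
    calc ‖⟪x, y⟫‖ ≤ ‖x‖ * ‖y‖ := norm_inner_le_norm x y
      _ = 1 := by rw [hnx, hny, mul_one]
  · constructor
    · intro h
      rw [habs] at h
      have hx0 : x ≠ 0 := by intro h0; rw [h0, norm_zero] at hnx; norm_num at hnx
      have hy0 : y ≠ 0 := by intro h0; rw [h0, norm_zero] at hny; norm_num at hny
      obtain ⟨r, hr0, hyx⟩ :=
        (norm_inner_eq_norm_iff hx0 hy0).mp (by rw [h, hnx, hny, mul_one])
      have hrabs : ‖r‖ = 1 := by
        have hn : ‖y‖ = ‖r‖ * ‖x‖ := by rw [hyx, norm_smul]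
        rw [hnx, hny, mul_one] at hn
        exact hn.symm
      refine ⟨r, hrabs, ?_⟩
      have hmat : u * S = r • S := by
        ext i j
        have := congrArg (fun v => v (i, j)) hyx
        simpa [hydef, hxdef, toEuc] using this
      calc u * ρ = (u * S) * S := by rw [mul_assoc, hSS]
        _ = (r • S) * S := by rw [hmat]
        _ = r • ρ := by rw [smul_mul, hSS]
    · rintro ⟨c, hc, hceq⟩
      rw [hceq, trace_smul, smul_eq_mul, hρtr, mul_one, hc]
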